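/- Let d ≥ 1 and let h₀, h₁, …, h_d be positive real numbers with h_i² ≥ h_{i−1}·h_{i+1} for all 1 ≤ i ≤ d−1 (a positive log-concave sequence), and let f(x) = Σ_{i=0}^{d} h_i · binom(x + d − i, d) ∈ ℝ[x]. Then for every integer m ≥ 2, f(−m)² ≥ f(−m+1)·f(−m−1). (In Ehrhart-theoretic terms: if the h*-polynomial of a lattice polytope P is log-concave, then the sequence |E_P(−1)|, |E_P(−2)|, |E_P(−3)|, … is log-concave.) -/

import Mathlib

/-- The polynomial `binom(x + c, d) = (1/d!) · (x + c)(x + c − 1) ⋯ (x + c − d + 1) ∈ ℝ[x]`.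
For `c = d − i` this is the polynomial `binom(x + d − i, d)`. -/
noncomputable def binomPoly (d : ℕ) (c : ℝ) : Polynomial ℝ :=
  Polynomial.C ((d.factorial : ℝ)⁻¹) *
    ∏ j ∈ Finset.range d, (Polynomial.X + Polynomial.C (c - j))

/-!
By reciprocity, `f (-(n + 1)) = (-1) ^ d * ∑ i, h i * (n + i).choose d`, so up to a common sign
the values `f (-m)` form the correlation `c n = ∑ i, x i * y (i + n)` of `x = h` with
`y k = k.choose d`, both extended by zero to `ℤ`. Each of `x`, `y` is log-concave without internal
zeros, i.e. `x (p - 1) * x (q + 1) ≤ x p * x q` whenever `p ≤ q`. Expanding,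
`c (n + 1) ^ 2 - c n * c (n + 2) = ∑ T (i, j)` over pairs, and pairing `(i, j)` with
`(j + 1, i - 1)` turns `T (i, j) + T (j + 1, i - 1)` into a product of a minor of `x` and a minor
of `y`, which have the same sign.
-/

open Finset Polynomial

/-- The order-two minor inequalities of a Pólya frequency sequence, without the sign condition. -/
def IsPF2 (x : ℤ → ℝ) : Prop :=
  ∀ ⦃p q : ℤ⦄, p ≤ q → x (p - 1) * x (q + 1) ≤ x p * x q

namespace IsPF2

variable {x y : ℤ → ℝ}

theorem of_logConcave (hx : ∀ n, 0 ≤ x n) (hlc : ∀ n, x (n - 1) * x (n + 1) ≤ x n ^ 2)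
    (hsupp : (Function.support x).OrdConnected) : IsPF2 x := by
  intro p q hpq
  induction q, hpq using Int.leInduction with
  | base => simpa [sq] using hlc p
  | succ q hpq ih =>
    by_cases hzero : x (p - 1) = 0 ∨ x (q + 1 + 1) = 0
    · rcases hzero with h | h <;> simp only [h, zero_mul, mul_zero] <;>
        exact mul_nonneg (hx _) (hx _)
    push Not at hzero
    have hmem : ∀ r, p - 1 ≤ r → r ≤ q + 1 + 1 → 0 < x r := fun r h₁ h₂ =>
      (hx r).lt_of_ne' (hsupp.out hzero.1 hzero.2 ⟨h₁, h₂⟩)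
    have hq : 0 < x q * x (q + 1) :=
      mul_pos (hmem q (by omega) (by omega)) (hmem _ (by omega) (by omega))
    have hlc' : x q * x (q + 1 + 1) ≤ x (q + 1) ^ 2 := by simpa using hlc (q + 1)
    refine le_of_mul_le_mul_right ?_ hq
    calc x (p - 1) * x (q + 1 + 1) * (x q * x (q + 1))
        = x (p - 1) * x (q + 1) * (x q * x (q + 1 + 1)) := by ring
      _ ≤ x p * x q * x (q + 1) ^ 2 :=
        mul_le_mul ih hlc' (mul_nonneg (hx _) (hx _)) (mul_nonneg (hx _) (hx _))
      _ = x p * x (q + 1) * (x q * x (q + 1)) := by ring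

theorem minor_mul_minor_nonneg (hx : IsPF2 x) (hy : IsPF2 y) (k i j : ℤ) :
    0 ≤ (x i * x j - x (i - 1) * x (j + 1)) *
      (y (i + k + 1) * y (j + k + 1) - y (i + k) * y (j + k + 2)) := by
  rcases lt_trichotomy i (j + 1) with hij | rfl | hij
  · have hy' := hy (show i + k + 1 ≤ j + k + 1 by omega)
    rw [add_sub_cancel_right, show j + k + 1 + 1 = j + k + 2 by ring] at hy'
    exact mul_nonneg (sub_nonneg.2 (hx (by omega))) (sub_nonneg.2 hy')
  · simp [mul_comm]
  · have hx' := hx (show j + 1 ≤ i - 1 by omega)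
    have hy' := hy (show j + k + 2 ≤ i + k by omega)
    simp only [add_sub_cancel_right, sub_add_cancel, show j + k + 2 - 1 = j + k + 1 by ring]
      at hx' hy'
    exact mul_nonneg_of_nonpos_of_nonpos (by linarith) (by linarith)

theorem sum_mul_sum_shift_le_sq (hx : IsPF2 x) (hy : IsPF2 y) (s : Finset ℤ)
    (hs : ∀ n ∉ s, x n = 0) (k : ℤ) :
    (∑ i ∈ s, x i * y (i + k)) * ∑ i ∈ s, x i * y (i + k + 2) ≤
      (∑ i ∈ s, x i * y (i + k + 1)) ^ 2 := by
  set T : ℤ × ℤ → ℝ := fun p =>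
    x p.1 * x p.2 * (y (p.1 + k + 1) * y (p.2 + k + 1) - y (p.1 + k) * y (p.2 + k + 2)) with hT
  set σ : ℤ × ℤ → ℤ × ℤ := fun p => (p.2 + 1, p.1 - 1) with hσ
  have hσσ : ∀ p, σ (σ p) = p := fun p => by simp [hσ]
  -- `T` vanishes off `s ×ˢ s`; `B` enlarges it to a `σ`-stable set.
  set B := s ×ˢ s ∪ (s ×ˢ s).image σ
  have hB : ∀ p ∈ B, σ p ∈ B := by
    intro p hp
    rcases mem_union.1 hp with hp | hp
    · exact mem_union_right _ (mem_image_of_mem σ hp)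
    · obtain ⟨q, hq, rfl⟩ := mem_image.1 hp
      exact mem_union_left _ (by rwa [hσσ])
  have hdiff : (∑ i ∈ s, x i * y (i + k + 1)) ^ 2 -
      (∑ i ∈ s, x i * y (i + k)) * ∑ i ∈ s, x i * y (i + k + 2) = ∑ p ∈ B, T p := by
    rw [← sum_subset subset_union_left fun p _ hp => ?_, sum_product, sq, sum_mul_sum,
      sum_mul_sum, ← sum_sub_distrib]
    · refine sum_congr rfl fun i _ => ?_
      rw [← sum_sub_distrib]
      exact sum_congr rfl fun j _ => by simp only [hT]; ring
    · rcases not_and_or.1 (mem_product.not.1 hp) with h | h <;> simp [hT, hs _ h]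
  have hswap : ∑ p ∈ B, T (σ p) = ∑ p ∈ B, T p :=
    sum_nbij' σ σ hB hB (fun p _ => hσσ p) (fun p _ => hσσ p) (fun _ _ => rfl)
  have hpair : ∀ p, T p + T (σ p) = (x p.1 * x p.2 - x (p.1 - 1) * x (p.2 + 1)) *
      (y (p.1 + k + 1) * y (p.2 + k + 1) - y (p.1 + k) * y (p.2 + k + 2)) := by
    rintro ⟨i, j⟩
    simp only [hT, hσ, show i - 1 + k + 1 = i + k by ring, show i - 1 + k + 2 = i + k + 1 by ring,
      show j + 1 + k = j + k + 1 by ring, show j + k + 1 + 1 = j + k + 2 by ring]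
    ring
  have hnonneg := sum_nonneg fun p (_ : p ∈ B) =>
    (hpair p).symm ▸ hx.minor_mul_minor_nonneg hy k p.1 p.2
  rw [sum_add_distrib, hswap] at hnonneg
  linarith

end IsPF2

theorem Nat.choose_mul_choose_add_two_le_sq (n d : ℕ) :
    n.choose d * (n + 2).choose d ≤ (n + 1).choose d ^ 2 := by
  rcases lt_or_ge n d with hnd | hdn
  · simp [Nat.choose_eq_zero_of_lt hnd]
  obtain ⟨e, rfl⟩ := Nat.exists_eq_add_of_le hdn
  have h₁ := Nat.choose_mul_succ_eq (d + e) d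
  have h₂ := Nat.choose_mul_succ_eq (d + e + 1) d
  rw [show d + e + 1 - d = e + 1 by omega] at h₁
  rw [show d + e + 1 + 1 - d = e + 2 by omega] at h₂
  refine Nat.le_of_mul_le_mul_right (c := (d + e + 1) * (e + 2)) ?_ (by positivity)
  calc (d + e).choose d * (d + e + 1 + 1).choose d * ((d + e + 1) * (e + 2))
      = ((d + e).choose d * (d + e + 1)) * ((d + e + 1 + 1).choose d * (e + 2)) := by ring
    _ = (d + e + 1).choose d ^ 2 * ((e + 1) * (d + e + 1 + 1)) := by rw [h₁, ← h₂]; ring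
    _ ≤ (d + e + 1).choose d ^ 2 * ((d + e + 1) * (e + 2)) :=
        Nat.mul_le_mul_left _ (by nlinarith)

theorem isPF2_choose (d : ℕ) :
    IsPF2 (fun n : ℤ => if 0 ≤ n then (n.toNat.choose d : ℝ) else 0) := by
  refine .of_logConcave (fun n => by split_ifs <;> positivity) (fun n => ?_) ?_
  · rcases le_or_gt n 0 with hn | hn
    · rw [if_neg (show ¬ 0 ≤ n - 1 by omega), zero_mul]
      exact sq_nonneg _
    obtain ⟨k, rfl⟩ : ∃ k : ℕ, n = k + 1 := ⟨(n - 1).toNat, by omega⟩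
    simp only [show (0 : ℤ) ≤ k + 1 - 1 by omega, show (0 : ℤ) ≤ k + 1 by omega,
      show (0 : ℤ) ≤ k + 1 + 1 by omega, if_true, show ((k : ℤ) + 1 - 1).toNat = k by omega,
      show ((k : ℤ) + 1).toNat = k + 1 by omega, show ((k : ℤ) + 1 + 1).toNat = k + 2 by omega]
    exact_mod_cast Nat.choose_mul_choose_add_two_le_sq k d
  · have : Function.support (fun n : ℤ => if 0 ≤ n then (n.toNat.choose d : ℝ) else 0)
        = Set.Ici (d : ℤ) := by
      ext n
      simp only [Function.mem_support, ne_eq, ite_eq_right_iff, Nat.cast_eq_zero,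
        Nat.choose_eq_zero_iff, Set.mem_Ici, not_forall, not_lt, exists_prop]
      omega
    rw [this]
    exact Set.ordConnected_Ici

theorem isPF2_extendByZero (d : ℕ) (h : ℕ → ℝ) (hpos : ∀ i ≤ d, 0 < h i)
    (hlc : ∀ i : ℕ, 1 ≤ i → i ≤ d - 1 → h (i - 1) * h (i + 1) ≤ h i ^ 2) :
    IsPF2 (fun n : ℤ => if 0 ≤ n ∧ n ≤ d then h n.toNat else 0) := by
  refine .of_logConcave (fun n => ?_) (fun n => ?_) ?_
  · split_ifs with hn
    · exact (hpos _ (by omega)).le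
    · exact le_rfl
  · by_cases hn : 1 ≤ n ∧ n + 1 ≤ d
    · obtain ⟨k, rfl⟩ : ∃ k : ℕ, n = k := ⟨n.toNat, by omega⟩
      simp only [show (0 : ℤ) ≤ k - 1 ∧ (k : ℤ) - 1 ≤ d by omega,
        show (0 : ℤ) ≤ k ∧ (k : ℤ) ≤ d by omega, show (0 : ℤ) ≤ k + 1 ∧ (k : ℤ) + 1 ≤ d by omega,
        show ((k : ℤ) - 1).toNat = k - 1 by omega, Int.toNat_natCast,
        show ((k : ℤ) + 1).toNat = k + 1 by omega]
      exact hlc k (by omega) (by omega)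
    · rcases not_and_or.1 hn with hn | hn
      · rw [if_neg (show ¬ (0 ≤ n - 1 ∧ n - 1 ≤ d) by omega), zero_mul]
        exact sq_nonneg _
      · rw [if_neg (show ¬ (0 ≤ n + 1 ∧ n + 1 ≤ d) by omega), mul_zero]
        exact sq_nonneg _
  · have : Function.support (fun n : ℤ => if 0 ≤ n ∧ n ≤ d then h n.toNat else 0)
        = Set.Icc 0 (d : ℤ) := by
      ext n
      simp only [Function.mem_support, ne_eq, ite_eq_right_iff, Set.mem_Icc, not_forall]
      exact ⟨fun ⟨hn, _⟩ => hn, fun hn => ⟨hn, (hpos _ (by omega)).ne'⟩⟩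
    rw [this]
    exact Set.ordConnected_Icc

/-- `|f (-(n + 1))|`, as in Ehrhart–Macdonald reciprocity. -/
noncomputable def reciprocalSeq (d : ℕ) (h : ℕ → ℝ) (n : ℕ) : ℝ :=
  ∑ i ∈ range (d + 1), h i * ((n + i).choose d : ℝ)

theorem reciprocalSeq_mul_le_sq (d : ℕ) (h : ℕ → ℝ) (hpos : ∀ i ≤ d, 0 < h i)
    (hlc : ∀ i : ℕ, 1 ≤ i → i ≤ d - 1 → h (i - 1) * h (i + 1) ≤ h i ^ 2) (n : ℕ) :
    reciprocalSeq d h n * reciprocalSeq d h (n + 2) ≤ reciprocalSeq d h (n + 1) ^ 2 := by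
  set x : ℤ → ℝ := fun i => if 0 ≤ i ∧ i ≤ d then h i.toNat else 0
  set y : ℤ → ℝ := fun j => if 0 ≤ j then (j.toNat.choose d : ℝ) else 0
  set s : Finset ℤ := (range (d + 1)).map Nat.castEmbedding
  have hs : ∀ i ∉ s, x i = 0 := by
    intro i hi
    refine if_neg fun hi' => hi (mem_map.2 ⟨i.toNat, mem_range.2 (by omega), ?_⟩)
    simp only [Nat.castEmbedding_apply]
    omega
  have hsum (N : ℕ) : reciprocalSeq d h N = ∑ i ∈ s, x i * y (i + N) := by
    rw [reciprocalSeq, sum_map]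
    refine sum_congr rfl fun i hi => ?_
    have hid : i ≤ d := Nat.lt_succ_iff.1 (mem_range.1 hi)
    simp only [Nat.castEmbedding_apply, x, y]
    rw [if_pos (by omega), if_pos (by omega), Int.toNat_natCast,
      show ((i : ℤ) + N).toNat = N + i by omega]
  simpa only [hsum, Nat.cast_add, Nat.cast_one, Nat.cast_ofNat, add_assoc] using
    (isPF2_extendByZero d h hpos hlc).sum_mul_sum_shift_le_sq (isPF2_choose d) s hs n

theorem binomPoly_eval (d : ℕ) (c x : ℝ) :
    (binomPoly d c).eval x = (descPochhammer ℝ d).eval (x + c) / d.factorial := by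
  simp only [binomPoly, eval_mul, eval_C, eval_prod, eval_add, eval_X,
    descPochhammer_eval_eq_prod_range, add_sub_assoc, inv_mul_eq_div]

theorem binomPoly_eval_neg (d n i : ℕ) :
    (binomPoly d (d - i)).eval (-((n : ℝ) + 1)) = (-1) ^ d * ((n + i).choose d : ℝ) := by
  have hr : -((n : ℝ) + 1) + (d - i) - d + 1 = -((n + i : ℕ) : ℝ) := by push_cast; ring
  rw [binomPoly_eval, descPochhammer_eval_eq_ascPochhammer, hr,
    ascPochhammer_eval_neg_eq_descPochhammer, descPochhammer_eval_eq_descFactorial,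
    Nat.descFactorial_eq_factorial_mul_choose]
  push_cast
  field_simp

theorem eval_neg_eq_reciprocalSeq (d : ℕ) (h : ℕ → ℝ) (n : ℕ) :
    (∑ i ∈ range (d + 1), C (h i) * binomPoly d ((d : ℝ) - i)).eval (-((n : ℝ) + 1)) =
      (-1) ^ d * reciprocalSeq d h n := by
  simp only [eval_finsetSum, eval_mul, eval_C, binomPoly_eval_neg, reciprocalSeq, mul_sum]
  exact sum_congr rfl fun i _ => by ring

theorem hstar_log_concave_implies_negative_evaluations_log_concave_general
    (d : ℕ) (h : ℕ → ℝ)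
    (hpos : ∀ i ≤ d, 0 < h i)
    (hlc : ∀ i : ℕ, 1 ≤ i → i ≤ d - 1 → h (i - 1) * h (i + 1) ≤ h i ^ 2)
    (f : Polynomial ℝ)
    (hf : f = ∑ i ∈ Finset.range (d + 1), Polynomial.C (h i) * binomPoly d ((d : ℝ) - i)) :
    ∀ m : ℤ, 2 ≤ m →
      f.eval (-(m : ℝ) + 1) * f.eval (-(m : ℝ) - 1) ≤ f.eval (-(m : ℝ)) ^ 2 := by
  intro m hm
  obtain ⟨n, rfl⟩ : ∃ n : ℕ, m = n + 2 := ⟨(m - 2).toNat, by omega⟩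
  have e₀ : -((n + 2 : ℤ) : ℝ) + 1 = -((n : ℝ) + 1) := by push_cast; ring
  have e₁ : -((n + 2 : ℤ) : ℝ) = -(((n + 1 : ℕ) : ℝ) + 1) := by push_cast; ring
  have e₂ : -((n + 2 : ℤ) : ℝ) - 1 = -(((n + 2 : ℕ) : ℝ) + 1) := by push_cast; ring
  rw [e₂, e₀, e₁, hf, eval_neg_eq_reciprocalSeq, eval_neg_eq_reciprocalSeq,
    eval_neg_eq_reciprocalSeq, mul_mul_mul_comm, ← sq, mul_pow]
  exact mul_le_mul_of_nonneg_left (reciprocalSeq_mul_le_sq d h hpos hlc n) (sq_nonneg _)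

/-- Let `h₀, …, h_d` (`d ≥ 1`) be a positive log-concave sequence and
`f(x) = Σ_{i=0}^{d} h_i·binom(x + d − i, d)`.  Then for every integer `m ≥ 2`,
`f(−m)² ≥ f(−m+1)·f(−m−1)`.  (If the `h*`-polynomial of a lattice polytope is
log-concave, then `|E_P(−1)|, |E_P(−2)|, …` is log-concave.) -/
theorem hstar_log_concave_implies_negative_evaluations_log_concave
    (d : ℕ) (hd : 1 ≤ d) (h : ℕ → ℝ)
    (hpos : ∀ i ≤ d, 0 < h i)
    (hlc : ∀ i : ℕ, 1 ≤ i → i ≤ d - 1 → h (i - 1) * h (i + 1) ≤ h i ^ 2)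
    (f : Polynomial ℝ)
    (hf : f = ∑ i ∈ Finset.range (d + 1), Polynomial.C (h i) * binomPoly d ((d : ℝ) - i)) :
    ∀ m : ℤ, 2 ≤ m →
      f.eval (-(m : ℝ) + 1) * f.eval (-(m : ℝ) - 1) ≤ f.eval (-(m : ℝ)) ^ 2 :=
  hstar_log_concave_implies_negative_evaluations_log_concave_general d h hpos hlc f hf
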